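/- For every integer n ≥ 3, the triple (G; ρ_0, ρ_1, ρ_2), where G = F_2^{n-1} ⋊_φ D_{2n} and ρ_0 = (0,h_0), ρ_1 = (0,h_1), ρ_2 = ((0,...,0,1)^T, h_0), is a string C-group of rank 3 and type [n,n]: each ρ_i is an involution, (ρ_0ρ_2)² = 1, ρ_0ρ_1 and ρ_1ρ_2 have order n, G = ⟨ρ_0,ρ_1,ρ_2⟩, and ⟨ρ_0,ρ_1⟩ ∩ ⟨ρ_1,ρ_2⟩ = ⟨ρ_1⟩. -/

import Mathlib

open Matrix DihedralGroup

/-- The matrix `U` of Lemma 3: (0-indexed) row `i` has a 1 at column `n-3-i` for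
`i ≤ n-3`, and the last row is all ones. -/
def Umat (n : ℕ) : Matrix (Fin (n-1)) (Fin (n-1)) (ZMod 2) :=
  Matrix.of fun i j =>
    if (i : ℕ) = n - 2 then 1 else if (i : ℕ) + (j : ℕ) = n - 3 then 1 else 0

/-- The anti-diagonal permutation matrix `V` of Lemma 3. -/
def Vmat (n : ℕ) : Matrix (Fin (n-1)) (Fin (n-1)) (ZMod 2) :=
  Matrix.of fun i j => if (i : ℕ) + (j : ℕ) = n - 2 then 1 else 0

/-- u = (0,…,0,1)ᵀ ∈ F₂^{n-1}. -/
def uVec (n : ℕ) : Fin (n-1) → ZMod 2 := fun i => if (i : ℕ) = n - 2 then 1 else 0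

/-- v = Vu = (1,0,…,0)ᵀ ∈ F₂^{n-1}. -/
def vVec (n : ℕ) : Fin (n-1) → ZMod 2 := fun i => if (i : ℕ) = 0 then 1 else 0

/-- The action of `D_{2n}` on `F₂^{n-1}` (written multiplicatively) induced by a
representation `φ : D_{2n} → Aut(F₂^{n-1})`. -/
def dihAct (n : ℕ) (φ : DihedralGroup n →* Multiplicative (AddAut (Fin (n-1) → ZMod 2))) :
    DihedralGroup n →* MulAut (Multiplicative (Fin (n-1) → ZMod 2)) where
  toFun x := AddEquiv.toMultiplicative (Multiplicative.toAdd (φ x))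
  map_one' := by ext w; simp
  map_mul' x y := by ext w; simp

/-- The semidirect product `G = F₂^{n-1} ⋊_φ D_{2n}`. -/
abbrev Gsd (n : ℕ) (φ : DihedralGroup n →* Multiplicative (AddAut (Fin (n-1) → ZMod 2))) :=
  Multiplicative (Fin (n-1) → ZMod 2) ⋊[dihAct n φ] DihedralGroup n

/-- `ρ₀ = (0, h₀)`, where `h₀ = sr 0`. -/
def rho0 (n : ℕ) (φ : DihedralGroup n →* Multiplicative (AddAut (Fin (n-1) → ZMod 2))) : Gsd n φ :=
  ⟨Multiplicative.ofAdd 0, sr 0⟩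

/-- `ρ₁ = (0, h₁)`, where `h₁ = sr 1`. -/
def rho1 (n : ℕ) (φ : DihedralGroup n →* Multiplicative (AddAut (Fin (n-1) → ZMod 2))) : Gsd n φ :=
  ⟨Multiplicative.ofAdd 0, sr 1⟩

/-- `ρ₂ = (u, h₀)`, where `u = (0,…,0,1)ᵀ`. -/
def rho2 (n : ℕ) (φ : DihedralGroup n →* Multiplicative (AddAut (Fin (n-1) → ZMod 2))) : Gsd n φ :=
  ⟨Multiplicative.ofAdd (uVec n), sr 0⟩

/-
Write `p = ρ₁ρ₂ = (e₀, r⁻¹)`. Since `h₁h₀ = r⁻¹` acts by `VU`, which shifts `e_m ↦ e₀ + e_{m+1}`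
(with `e_{n-1} = 0`), induction gives `p^(m+1) = (e_m, r^(-(m+1)))` for `m < n`. Hence `p` has
order `n`, and multiplying `p^(m+1)` by a rotation from `⟨ρ₀, ρ₁⟩ = D_{2n}` isolates every basis
vector `e_m`, so `ρ₀, ρ₁, ρ₂` generate. The group `⟨ρ₁, ρ₂⟩` consists of the `p^k` and `p^k ρ₁`, and
such an element lies in the complement `D_{2n} ⊇ ⟨ρ₀, ρ₁⟩` only when the translation part
`e_{k-1}` of `p^k` vanishes, i.e. when `p^k = 1`.
-/

theorem Subgroup.eq_top_of_forall_ofAdd_single_mem {ι : Type*} [Finite ι] [DecidableEq ι]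
    {k : ℕ} (H : Subgroup (Multiplicative (ι → ZMod k)))
    (h : ∀ i, Multiplicative.ofAdd (Pi.single i 1) ∈ H) : H = ⊤ := by
  suffices hH : AddSubgroup.toZModSubmodule k H.toAddSubgroup' = ⊤ by
    simpa using hH
  rw [eq_top_iff, ← (Pi.basisFun (ZMod k) ι).span_eq, Submodule.span_le]
  rintro _ ⟨i, rfl⟩
  simpa using h i

theorem Subgroup.exists_zpow_of_mem_closure_pair {G : Type*} [Group G] {a b : G}
    (ha : a * a = 1) (hb : b * b = 1) {g : G} (hg : g ∈ Subgroup.closure {a, b}) :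
    ∃ k : ℤ, g = (a * b) ^ k ∨ g = (a * b) ^ k * a := by
  have ha' : a⁻¹ = a := inv_eq_of_mul_eq_one_right ha
  have hb' : b⁻¹ = b := inv_eq_of_mul_eq_one_right hb
  have hswap : ∀ k : ℤ, a * (a * b) ^ k = (a * b) ^ (-k) * a := by
    intro k
    have hconj : a * (a * b) * a⁻¹ = (a * b)⁻¹ := by
      rw [_root_.mul_inv_rev, ha', hb', ← mul_assoc, ha, one_mul]
    rw [_root_.zpow_neg, ← _root_.inv_zpow, ← hconj, conj_zpow, inv_mul_cancel_right]
  induction hg using Subgroup.closure_induction with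
  | mem x hx =>
    rcases hx with rfl | rfl
    · exact ⟨0, Or.inr (by simp)⟩
    · refine ⟨-1, Or.inr ?_⟩
      rw [_root_.zpow_neg_one, _root_.mul_inv_rev, hb', inv_mul_cancel_right]
  | one => exact ⟨0, Or.inl (by simp)⟩
  | mul x y _ _ hx hy =>
    obtain ⟨k, rfl | rfl⟩ := hx <;> obtain ⟨l, rfl | rfl⟩ := hy
    · exact ⟨k + l, Or.inl (_root_.zpow_add _ _ _).symm⟩
    · exact ⟨k + l, Or.inr (by rw [_root_.zpow_add, mul_assoc])⟩
    · refine ⟨k - l, Or.inr ?_⟩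
      rw [mul_assoc, hswap, ← mul_assoc, ← _root_.zpow_add, sub_eq_add_neg]
    · refine ⟨k - l, Or.inl ?_⟩
      rw [mul_assoc, ← mul_assoc a, hswap, mul_assoc, ha, mul_one, ← _root_.zpow_add,
        sub_eq_add_neg]
  | inv x _ hx =>
    obtain ⟨k, rfl | rfl⟩ := hx
    · exact ⟨-k, Or.inl (_root_.zpow_neg _ _).symm⟩
    · exact ⟨k, Or.inr (by rw [_root_.mul_inv_rev, ha', ← _root_.zpow_neg, hswap, neg_neg])⟩

theorem DihedralGroup.closure_sr_zero_sr_one (n : ℕ) :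
    Subgroup.closure {sr 0, sr 1} = (⊤ : Subgroup (DihedralGroup n)) := by
  have hr : ∀ k : ZMod n, r k ∈ Subgroup.closure {sr (0 : ZMod n), sr 1} := by
    intro k
    have hr1 : r 1 = sr (0 : ZMod n) * sr 1 := by rw [sr_mul_sr, sub_zero]
    rw [← ZMod.intCast_zmod_cast k, ← r_one_zpow, hr1]
    exact zpow_mem (mul_mem (Subgroup.subset_closure (by simp))
      (Subgroup.subset_closure (by simp))) _
  rw [eq_top_iff]
  rintro (k | k) -
  · exact hr k
  · rw [← zero_add k, ← sr_mul_r]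
    exact mul_mem (Subgroup.subset_closure (by simp)) (hr k)

/- Indexed by `ℕ` rather than `Fin k`, so that `unitVec k m = 0` for `m ≥ k`: this lets the
shift `e_m ↦ e_0 + e_{m+1}` below hold uniformly up to `m = n - 2`. -/
def unitVec (k m : ℕ) : Fin k → ZMod 2 := fun i => if (i : ℕ) = m then 1 else 0

lemma unitVec_eq_single {k m : ℕ} (hm : m < k) : unitVec k m = Pi.single ⟨m, hm⟩ 1 := by
  funext i
  simp [unitVec, Pi.single_apply, Fin.ext_iff]

lemma unitVec_of_le {k m : ℕ} (hm : k ≤ m) : unitVec k m = 0 := by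
  funext i
  simp only [unitVec, Pi.zero_apply]
  exact if_neg (by omega)

lemma unitVec_ne_zero {k m : ℕ} (hm : m < k) : unitVec k m ≠ 0 := by
  simp [unitVec_eq_single hm]

lemma mulVec_unitVec {l k m : ℕ} (M : Matrix (Fin l) (Fin k) (ZMod 2)) (hm : m < k) :
    M *ᵥ unitVec k m = fun i => M i ⟨m, hm⟩ := by
  rw [unitVec_eq_single hm, mulVec_single_one]
  rfl

lemma Vmat_mulVec_unitVec {n m : ℕ} (hm : m < n - 1) :
    Vmat n *ᵥ unitVec (n - 1) m = unitVec (n - 1) (n - 2 - m) := by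
  rw [mulVec_unitVec _ hm]
  funext i
  simp only [Vmat, of_apply, unitVec]
  congr 1
  exact propext (by omega)

lemma Umat_mulVec_unitVec {n m : ℕ} (hm : m + 2 < n) :
    Umat n *ᵥ unitVec (n - 1) m = unitVec (n - 1) (n - 3 - m) + unitVec (n - 1) (n - 2) := by
  rw [mulVec_unitVec _ (by omega)]
  funext i
  simp only [Umat, of_apply, unitVec, Pi.add_apply]
  split_ifs <;> first | rfl | omega

lemma Umat_mulVec_unitVec_last {n : ℕ} (hn : 2 ≤ n) :
    Umat n *ᵥ unitVec (n - 1) (n - 2) = unitVec (n - 1) (n - 2) := by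
  rw [mulVec_unitVec _ (by omega)]
  funext i
  simp only [Umat, of_apply, unitVec]
  split_ifs <;> first | rfl | omega

lemma Vmat_mulVec_Umat_mulVec_unitVec {n m : ℕ} (hm : m < n - 1) :
    Vmat n *ᵥ (Umat n *ᵥ unitVec (n - 1) m) = unitVec (n - 1) 0 + unitVec (n - 1) (m + 1) := by
  rcases Nat.lt_or_ge (m + 2) n with hm' | hm'
  · rw [Umat_mulVec_unitVec hm', mulVec_add, Vmat_mulVec_unitVec (by omega),
      Vmat_mulVec_unitVec (by omega), add_comm]
    congr 2 <;> omega
  · obtain rfl : m = n - 2 := by omega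
    rw [Umat_mulVec_unitVec_last (by omega), Vmat_mulVec_unitVec hm, Nat.sub_self,
      unitVec_of_le (by omega : n - 1 ≤ n - 2 + 1), add_zero]

section Gsd

open Multiplicative SemidirectProduct

variable {n : ℕ} {φ : DihedralGroup n →* Multiplicative (AddAut (Fin (n-1) → ZMod 2))}

lemma Gsd.mk_mul_mk (w v : Fin (n-1) → ZMod 2) (x y : DihedralGroup n) :
    (⟨ofAdd w, x⟩ : Gsd n φ) * ⟨ofAdd v, y⟩ = ⟨ofAdd (w + toAdd (φ x) v), x * y⟩ :=
  rfl

lemma Gsd.mk_sr_mul_self {w : Fin (n-1) → ZMod 2} {k : ZMod n} (hw : toAdd (φ (sr k)) w = w) :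
    (⟨ofAdd w, sr k⟩ : Gsd n φ) * ⟨ofAdd w, sr k⟩ = 1 := by
  rw [Gsd.mk_mul_mk, hw, ZModModule.add_self, sr_mul_self]
  rfl

lemma Gsd.orderOf_mk_sr {w : Fin (n-1) → ZMod 2} {k : ZMod n} (hw : toAdd (φ (sr k)) w = w) :
    orderOf (⟨ofAdd w, sr k⟩ : Gsd n φ) = 2 := by
  refine orderOf_eq_prime (by rw [sq, Gsd.mk_sr_mul_self hw]) fun h => ?_
  have h' : sr k = r 0 := congrArg right h
  cases h'

lemma Gsd.left_mul_rho1 (g : Gsd n φ) : (g * rho1 n φ).left = g.left := by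
  rw [mul_left, rho1, ofAdd_zero, map_one, mul_one]

lemma rho0_mul_rho1 : rho0 n φ * rho1 n φ = inr (r 1) := by
  rw [rho0, rho1, Gsd.mk_mul_mk, map_zero, add_zero, sr_mul_sr, sub_zero]
  rfl

lemma orderOf_rho0_mul_rho1 : orderOf (rho0 n φ * rho1 n φ) = n := by
  rw [rho0_mul_rho1, orderOf_injective _ inr_injective, orderOf_r_one]

lemma toAdd_map_sr_zero_uVec (hn : 2 ≤ n)
    (hφ0 : ∀ w, toAdd (φ (sr 0)) w = (Umat n).mulVec w) :
    toAdd (φ (sr 0)) (uVec n) = uVec n := by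
  rw [hφ0]
  exact Umat_mulVec_unitVec_last hn

lemma rho0_mul_rho2 (hn : 2 ≤ n)
    (hφ0 : ∀ w, toAdd (φ (sr 0)) w = (Umat n).mulVec w) :
    rho0 n φ * rho2 n φ = ⟨ofAdd (uVec n), 1⟩ := by
  rw [rho0, rho2, Gsd.mk_mul_mk, toAdd_map_sr_zero_uVec hn hφ0, zero_add, sr_mul_sr, sub_self,
    ← one_def]

lemma rho0_mul_rho2_sq (hn : 2 ≤ n)
    (hφ0 : ∀ w, toAdd (φ (sr 0)) w = (Umat n).mulVec w) :
    (rho0 n φ * rho2 n φ) ^ 2 = 1 := by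
  rw [rho0_mul_rho2 hn hφ0, sq, Gsd.mk_mul_mk, map_one, toAdd_one, AddAut.zero_apply,
    ZModModule.add_self, mul_one]
  rfl

lemma toAdd_map_r_neg_one
    (hφ0 : ∀ w, toAdd (φ (sr 0)) w = (Umat n).mulVec w)
    (hφ1 : ∀ w, toAdd (φ (sr 1)) w = (Vmat n).mulVec w) (w : Fin (n-1) → ZMod 2) :
    toAdd (φ (r (-1))) w = Vmat n *ᵥ (Umat n *ᵥ w) := by
  rw [← zero_sub, ← sr_mul_sr, map_mul, toAdd_mul, AddAut.add_apply, hφ0, hφ1]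

lemma rho1_mul_rho2 (hn : 2 ≤ n)
    (hφ1 : ∀ w, toAdd (φ (sr 1)) w = (Vmat n).mulVec w) :
    rho1 n φ * rho2 n φ = ⟨ofAdd (unitVec (n-1) 0), r (-1)⟩ := by
  rw [rho1, rho2, Gsd.mk_mul_mk, hφ1, zero_add, sr_mul_sr, zero_sub]
  congr
  change Vmat n *ᵥ unitVec (n-1) (n-2) = _
  rw [Vmat_mulVec_unitVec (by omega), Nat.sub_self]

lemma rho1_mul_rho2_pow_succ (hn : 2 ≤ n)
    (hφ0 : ∀ w, toAdd (φ (sr 0)) w = (Umat n).mulVec w)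
    (hφ1 : ∀ w, toAdd (φ (sr 1)) w = (Vmat n).mulVec w) {m : ℕ} (hm : m < n) :
    (rho1 n φ * rho2 n φ) ^ (m + 1) =
      ⟨ofAdd (unitVec (n-1) m), r (-((m + 1 : ℕ) : ZMod n))⟩ := by
  induction m with
  | zero => rw [zero_add, pow_one, rho1_mul_rho2 hn hφ1, Nat.cast_one]
  | succ m ih =>
    rw [pow_succ', ih (by omega), rho1_mul_rho2 hn hφ1, Gsd.mk_mul_mk,
      toAdd_map_r_neg_one hφ0 hφ1, Vmat_mulVec_Umat_mulVec_unitVec (by omega), ← add_assoc,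
      ZModModule.add_self, zero_add, r_mul_r]
    congr 2
    push_cast
    ring

lemma rho1_mul_rho2_pow_n (hn : 2 ≤ n)
    (hφ0 : ∀ w, toAdd (φ (sr 0)) w = (Umat n).mulVec w)
    (hφ1 : ∀ w, toAdd (φ (sr 1)) w = (Vmat n).mulVec w) :
    (rho1 n φ * rho2 n φ) ^ n = 1 := by
  have h := rho1_mul_rho2_pow_succ hn hφ0 hφ1 (m := n - 1) (by omega)
  rw [Nat.sub_add_cancel (by omega), unitVec_of_le le_rfl, ZMod.natCast_self, neg_zero] at h
  exact h

lemma orderOf_rho1_mul_rho2 (hn : 2 ≤ n)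
    (hφ0 : ∀ w, toAdd (φ (sr 0)) w = (Umat n).mulVec w)
    (hφ1 : ∀ w, toAdd (φ (sr 1)) w = (Vmat n).mulVec w) :
    orderOf (rho1 n φ * rho2 n φ) = n := by
  refine Nat.dvd_antisymm (orderOf_dvd_of_pow_eq_one (rho1_mul_rho2_pow_n hn hφ0 hφ1)) ?_
  have hright : rightHom (rho1 n φ * rho2 n φ) = (r 1)⁻¹ := by
    rw [rightHom_eq_right, rho1_mul_rho2 hn hφ1, inv_r]
  calc n = orderOf (rightHom (rho1 n φ * rho2 n φ)) := by
        rw [hright, orderOf_inv, orderOf_r_one]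
    _ ∣ orderOf (rho1 n φ * rho2 n φ) := orderOf_map_dvd _ _

lemma rho1_mul_rho2_zpow_eq_one_of_left_eq_one (hn : 2 ≤ n)
    (hφ0 : ∀ w, toAdd (φ (sr 0)) w = (Umat n).mulVec w)
    (hφ1 : ∀ w, toAdd (φ (sr 1)) w = (Vmat n).mulVec w) {k : ℤ}
    (hk : ((rho1 n φ * rho2 n φ) ^ k).left = 1) : (rho1 n φ * rho2 n φ) ^ k = 1 := by
  classical
  have hfin : IsOfFinOrder (rho1 n φ * rho2 n φ) :=
    isOfFinOrder_iff_pow_eq_one.mpr ⟨n, by omega, rho1_mul_rho2_pow_n hn hφ0 hφ1⟩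
  obtain ⟨m, hm, hpow⟩ := Finset.mem_image.mp
    (hfin.mem_zpowers_iff_mem_range_orderOf.mp (Subgroup.zpow_mem_zpowers _ k))
  rw [Finset.mem_range, orderOf_rho1_mul_rho2 hn hφ0 hφ1] at hm
  rw [← hpow] at hk ⊢
  rcases m with _ | m
  · exact pow_zero _
  · rw [rho1_mul_rho2_pow_succ hn hφ0 hφ1 (m := m) (by omega)] at hk
    exact absurd (congrArg toAdd hk) (unitVec_ne_zero (by omega))

lemma range_inr_le_closure_rho :
    (inr : DihedralGroup n →* Gsd n φ).range ≤
      Subgroup.closure {rho0 n φ, rho1 n φ, rho2 n φ} := by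
  rw [MonoidHom.range_eq_map, ← closure_sr_zero_sr_one, MonoidHom.map_closure, Set.image_pair]
  refine Subgroup.closure_mono ?_
  rintro _ (rfl | rfl)
  exacts [Or.inl rfl, Or.inr (Or.inl rfl)]

lemma inl_mem_closure_rho (hn : 2 ≤ n)
    (hφ0 : ∀ w, toAdd (φ (sr 0)) w = (Umat n).mulVec w)
    (hφ1 : ∀ w, toAdd (φ (sr 1)) w = (Vmat n).mulVec w)
    (x : Multiplicative (Fin (n-1) → ZMod 2)) :
    inl x ∈ Subgroup.closure {rho0 n φ, rho1 n φ, rho2 n φ} := by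
  set C := Subgroup.closure {rho0 n φ, rho1 n φ, rho2 n φ}
  suffices h : C.comap inl = ⊤ by
    rw [← Subgroup.mem_comap, h]
    exact Subgroup.mem_top x
  refine Subgroup.eq_top_of_forall_ofAdd_single_mem _ fun ⟨m, hm⟩ => ?_
  have hpow := rho1_mul_rho2_pow_succ hn hφ0 hφ1 (m := m) (by omega)
  have hinl : inl (ofAdd (unitVec (n-1) m)) =
      (rho1 n φ * rho2 n φ) ^ (m + 1) * inr (r ((m + 1 : ℕ) : ZMod n)) := by
    rw [hpow, mk_eq_inl_mul_inr, mul_assoc, ← map_mul, r_mul_r, neg_add_cancel, r_zero,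
      map_one, mul_one]
  rw [Subgroup.mem_comap, ← unitVec_eq_single, hinl]
  exact mul_mem (pow_mem (mul_mem (Subgroup.subset_closure (by simp))
    (Subgroup.subset_closure (by simp))) _) (range_inr_le_closure_rho ⟨_, rfl⟩)

lemma closure_rho_eq_top (hn : 2 ≤ n)
    (hφ0 : ∀ w, toAdd (φ (sr 0)) w = (Umat n).mulVec w)
    (hφ1 : ∀ w, toAdd (φ (sr 1)) w = (Vmat n).mulVec w) :
    Subgroup.closure {rho0 n φ, rho1 n φ, rho2 n φ} = ⊤ := by
  refine eq_top_iff.mpr fun g _ => ?_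
  rw [← inl_left_mul_inr_right g]
  exact mul_mem (inl_mem_closure_rho hn hφ0 hφ1 _) (range_inr_le_closure_rho ⟨_, rfl⟩)

lemma closure_rho0_rho1_le_range_inr :
    Subgroup.closure {rho0 n φ, rho1 n φ} ≤ (inr : DihedralGroup n →* Gsd n φ).range := by
  rw [Subgroup.closure_le]
  rintro _ (rfl | rfl)
  exacts [⟨sr 0, rfl⟩, ⟨sr 1, rfl⟩]

lemma closure_rho0_rho1_inf_closure_rho1_rho2 (hn : 2 ≤ n)
    (hφ0 : ∀ w, toAdd (φ (sr 0)) w = (Umat n).mulVec w)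
    (hφ1 : ∀ w, toAdd (φ (sr 1)) w = (Vmat n).mulVec w) :
    Subgroup.closure {rho0 n φ, rho1 n φ} ⊓ Subgroup.closure {rho1 n φ, rho2 n φ} =
      Subgroup.closure {rho1 n φ} := by
  refine le_antisymm (fun g ⟨hg01, hg12⟩ => ?_)
    (le_inf (Subgroup.closure_mono (by simp)) (Subgroup.closure_mono (by simp)))
  obtain ⟨x, rfl⟩ := closure_rho0_rho1_le_range_inr hg01
  have hleft : (inr x : Gsd n φ).left = 1 := rfl
  obtain ⟨k, hk | hk⟩ := Subgroup.exists_zpow_of_mem_closure_pair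
    (a := rho1 n φ) (b := rho2 n φ) (Gsd.mk_sr_mul_self (map_zero _))
    (Gsd.mk_sr_mul_self (toAdd_map_sr_zero_uVec hn hφ0)) hg12
  · rw [hk, rho1_mul_rho2_zpow_eq_one_of_left_eq_one hn hφ0 hφ1 (hk ▸ hleft)]
    exact one_mem _
  · rw [hk, Gsd.left_mul_rho1] at hleft
    rw [hk, rho1_mul_rho2_zpow_eq_one_of_left_eq_one hn hφ0 hφ1 hleft, one_mul]
    exact Subgroup.subset_closure rfl

end Gsd

/-- (G; ρ0, ρ1, ρ2) is a string C-group of rank 3 and type [n,n]: each ρi is an involution, (ρ0ρ2)^2 = 1, ρ0ρ1 and ρ1ρ2 have order n, G = ⟨ρ0,ρ1,ρ2⟩, and ⟨ρ0,ρ1⟩ ∩ ⟨ρ1,ρ2⟩ = ⟨ρ1⟩. -/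
theorem stmt_15 (n : ℕ) (hn : 3 ≤ n)
    (φ : DihedralGroup n →* Multiplicative (AddAut (Fin (n-1) → ZMod 2)))
    (hφ0 : ∀ w, Multiplicative.toAdd (φ (sr 0)) w = (Umat n).mulVec w)
    (hφ1 : ∀ w, Multiplicative.toAdd (φ (sr 1)) w = (Vmat n).mulVec w) :
    orderOf (rho0 n φ) = 2 ∧ orderOf (rho1 n φ) = 2 ∧ orderOf (rho2 n φ) = 2 ∧
    (rho0 n φ * rho2 n φ) ^ 2 = 1 ∧
    orderOf (rho0 n φ * rho1 n φ) = n ∧ orderOf (rho1 n φ * rho2 n φ) = n ∧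
    Subgroup.closure {rho0 n φ, rho1 n φ, rho2 n φ} = (⊤ : Subgroup (Gsd n φ)) ∧
    Subgroup.closure {rho0 n φ, rho1 n φ} ⊓ Subgroup.closure {rho1 n φ, rho2 n φ} =
      Subgroup.closure {rho1 n φ} := by
  have hn2 : 2 ≤ n := by omega
  exact ⟨Gsd.orderOf_mk_sr (map_zero _), Gsd.orderOf_mk_sr (map_zero _),
    Gsd.orderOf_mk_sr (toAdd_map_sr_zero_uVec hn2 hφ0), rho0_mul_rho2_sq hn2 hφ0,
    orderOf_rho0_mul_rho1, orderOf_rho1_mul_rho2 hn2 hφ0 hφ1, closure_rho_eq_top hn2 hφ0 hφ1,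
    closure_rho0_rho1_inf_closure_rho1_rho2 hn2 hφ0 hφ1⟩
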